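/- arXiv:1710.01294 — 2 statements merged into one kernel-verified Lean document; each statement's English description precedes it below -/
import Mathlib

section
/- Let G be a graph with minimum degree δ ≥ k. Then γ_k(G) ≤ (1 − δ'/(b^{1/δ'} (1+δ')^{1+1/δ'})) · n, where δ' = δ − k + 1, b = C(δ, k−1) is the binomial coefficient, and n = |V(G)|. -/
/-!
Choose each vertex independently with probability `p = 1 - q` and add to the chosen set `A`
every vertex outside it with fewer than `k` neighbours in `A`; the result is `k`-dominating.
Fix `δ` neighbours of a vertex `v`: if `v` is undercovered, then `v` together with some
`δ' = δ - k + 1` of them avoids `A`, so a union bound over these `C(δ, δ') ≤ C(δ, k - 1) = b`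
sets bounds the probability of this event by `b q ^ (δ' + 1)`. Hence
`γ_k ≤ n (1 - q + b q ^ (δ' + 1))`, and `q = (b (1 + δ')) ^ (-1 / δ')` gives the bound.
-/

def kDominating {V : Type*} (G : SimpleGraph V) (k : ℕ) (X : Set V) : Prop :=
  ∀ v ∉ X, k ≤ (G.neighborSet v ∩ X).ncard

noncomputable def kDominationNumber {V : Type*} (G : SimpleGraph V) (k : ℕ) : ℕ :=
  sInf {n | ∃ X : Set V, kDominating G k X ∧ X.ncard = n}

open Finset

theorem Finset.sum_filter_le_sum_sum_filter {ι κ M : Type*} [AddCommMonoid M] [PartialOrder M]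
    [IsOrderedAddMonoid M] {s : Finset ι} {t : Finset κ} {w : ι → M} (hw : ∀ i ∈ s, 0 ≤ w i)
    {P : ι → Prop} [DecidablePred P] {Q : κ → ι → Prop} [∀ j, DecidablePred (Q j)]
    (h : ∀ i ∈ s, P i → ∃ j ∈ t, Q j i) :
    ∑ i ∈ s with P i, w i ≤ ∑ j ∈ t, ∑ i ∈ s with Q j i, w i := by
  calc ∑ i ∈ s with P i, w i
      ≤ ∑ i ∈ s with P i, ∑ j ∈ t with Q j i, w i := by
        refine sum_le_sum fun i hi => ?_
        obtain ⟨his, hPi⟩ := mem_filter.1 hi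
        obtain ⟨j, hj, hQ⟩ := h i his hPi
        exact single_le_sum (f := fun _ => w i) (fun _ _ => hw i his) (mem_filter.2 ⟨hj, hQ⟩)
    _ ≤ ∑ i ∈ s, ∑ j ∈ t with Q j i, w i :=
        sum_le_sum_of_subset_of_nonneg (filter_subset _ _)
          fun i his _ => sum_nonneg fun _ _ => hw i his
    _ = ∑ j ∈ t, ∑ i ∈ s with Q j i, w i := by
        simp_rw [sum_filter]
        exact sum_comm

theorem Finset.sum_mul_card_eq_sum_sum_filter_mem {ι α R : Type*} [Fintype α] [DecidableEq α]
    [CommSemiring R] (s : Finset ι) (w : ι → R) (f : ι → Finset α) :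
    ∑ i ∈ s, w i * #(f i) = ∑ a, ∑ i ∈ s with a ∈ f i, w i := by
  simp_rw [sum_filter]
  rw [sum_comm]
  refine sum_congr rfl fun i _ => ?_
  rw [sum_ite_mem, univ_inter, sum_const, nsmul_eq_mul, mul_comm]

section RandomSubset

variable {V : Type*} [Fintype V]

/-- The probability that the random subset of `V`, containing each element independently with
probability `p`, is exactly `A`. -/
noncomputable def subsetProb (p : ℝ) (A : Finset V) : ℝ :=
  p ^ #A * (1 - p) ^ (Fintype.card V - #A)

theorem subsetProb_nonneg {p : ℝ} (hp₀ : 0 ≤ p) (hp₁ : p ≤ 1) (A : Finset V) : 0 ≤ subsetProb p A :=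
  mul_nonneg (pow_nonneg hp₀ _) (pow_nonneg (sub_nonneg.2 hp₁) _)

theorem sum_subsetProb (p : ℝ) : ∑ A : Finset V, subsetProb p A = 1 := by
  simp [subsetProb, Fintype.sum_pow_mul_eq_add_pow]

theorem sum_subsetProb_disjoint [DecidableEq V] (p : ℝ) (T : Finset V) :
    ∑ A with Disjoint T A, subsetProb p A = (1 - p) ^ #T := by
  have hfilter : ({A | Disjoint T A} : Finset (Finset V)) = Tᶜ.powerset := by
    ext A; simp [subset_compl_iff_disjoint_left]
  have hprob : ∀ A ∈ Tᶜ.powerset,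
      subsetProb p A = p ^ #A * (1 - p) ^ (#Tᶜ - #A) * (1 - p) ^ #T := by
    intro A hA
    have hA := card_le_card (mem_powerset.1 hA)
    rw [card_compl] at hA ⊢
    rw [subsetProb, mul_assoc, ← pow_add]
    congr 2
    have := card_le_univ T
    omega
  rw [hfilter, sum_congr rfl hprob, ← sum_mul, sum_pow_mul_eq_add_pow]
  simp

theorem sum_subsetProb_mem [DecidableEq V] (p : ℝ) (v : V) :
    ∑ A with v ∈ A, subsetProb p A = p := by
  have h := sum_filter_add_sum_filter_not univ (Disjoint {v}) (subsetProb p)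
  rw [sum_subsetProb_disjoint, sum_subsetProb] at h
  simp only [disjoint_singleton_left, not_not, card_singleton, pow_one] at h
  linarith

theorem sum_subsetProb_mul_card [DecidableEq V] (p : ℝ) :
    ∑ A : Finset V, subsetProb p A * #A = Fintype.card V * p := by
  simp [sum_mul_card_eq_sum_sum_filter_mem, sum_subsetProb_mem]

end RandomSubset

theorem kDominationNumber_le_ncard {V : Type*} {G : SimpleGraph V} {k : ℕ} {X : Set V}
    (hX : kDominating G k X) : kDominationNumber G k ≤ X.ncard :=
  Nat.sInf_le ⟨X, hX, rfl⟩

namespace SimpleGraph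

variable {V : Type*} [Fintype V] [DecidableEq V] (G : SimpleGraph V) [DecidableRel G.Adj]

def undercovered (k : ℕ) (A : Finset V) : Finset V :=
  {v | v ∉ A ∧ #(G.neighborFinset v ∩ A) < k}

theorem kDominating_union_undercovered (k : ℕ) (A : Finset V) :
    kDominating G k ↑(A ∪ G.undercovered k A) := by
  intro v hv
  simp only [coe_union, Set.mem_union, mem_coe, undercovered, mem_filter, mem_univ, true_and,
    not_or, not_and, not_lt] at hv
  calc k ≤ #(G.neighborFinset v ∩ A) := hv.2 hv.1
    _ = (G.neighborSet v ∩ ↑A).ncard := by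
        rw [← Set.ncard_coe_finset, coe_inter, coe_neighborFinset]
    _ ≤ (G.neighborSet v ∩ ↑(A ∪ G.undercovered k A)).ncard := by
        gcongr
        · exact Set.toFinite _
        · exact subset_union_left

variable {G}

theorem exists_disjoint_insert_of_mem_undercovered {k : ℕ} {A N : Finset V} {v : V}
    (hv : v ∈ G.undercovered k A) (hN : N ⊆ G.neighborFinset v) (hk : k ≤ #N) :
    ∃ S ∈ N.powersetCard (#N - k + 1), Disjoint (insert v S) A := by
  obtain ⟨hvA, hlt⟩ := (mem_filter.1 hv).2
  have hNA : #(N ∩ A) < k := (card_le_card (inter_subset_inter_right hN)).trans_lt hlt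
  have hcard : #N - k + 1 ≤ #(N \ A) := by
    rw [card_sdiff, inter_comm]
    omega
  obtain ⟨S, hSN, hS⟩ := exists_subset_card_eq hcard
  refine ⟨S, mem_powersetCard.2 ⟨hSN.trans sdiff_subset, hS⟩, ?_⟩
  rw [disjoint_insert_left]
  exact ⟨hvA, disjoint_of_subset_left hSN sdiff_disjoint⟩

theorem sum_subsetProb_mem_undercovered_le {p : ℝ} (hp₀ : 0 ≤ p) (hp₁ : p ≤ 1) {k : ℕ}
    (hk : k ≤ G.minDegree) (v : V) :
    ∑ A with v ∈ G.undercovered k A, subsetProb p A ≤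
      G.minDegree.choose (G.minDegree - k + 1) * (1 - p) ^ (G.minDegree - k + 2) := by
  have hdeg : G.minDegree ≤ #(G.neighborFinset v) := by
    rw [card_neighborFinset_eq_degree]
    exact G.minDegree_le_degree v
  obtain ⟨N, hN, hNcard⟩ := exists_subset_card_eq hdeg
  have hvN : v ∉ N := fun h => G.notMem_neighborFinset_self v (hN h)
  calc ∑ A with v ∈ G.undercovered k A, subsetProb p A
      ≤ ∑ S ∈ N.powersetCard (#N - k + 1), ∑ A with Disjoint (insert v S) A, subsetProb p A :=
        sum_filter_le_sum_sum_filter (fun A _ => subsetProb_nonneg hp₀ hp₁ A)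
          fun A _ hA => exists_disjoint_insert_of_mem_undercovered hA hN (hNcard ▸ hk)
    _ = ∑ S ∈ N.powersetCard (#N - k + 1), (1 - p) ^ (G.minDegree - k + 2) := by
        refine sum_congr rfl fun S hS => ?_
        obtain ⟨hSN, hScard⟩ := mem_powersetCard.1 hS
        rw [sum_subsetProb_disjoint, card_insert_of_notMem fun h => hvN (hSN h), hScard, hNcard]
    _ = _ := by rw [sum_const, card_powersetCard, hNcard, nsmul_eq_mul]

theorem kDominationNumber_le {p : ℝ} (hp₀ : 0 ≤ p) (hp₁ : p ≤ 1) {k : ℕ}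
    (hk : k ≤ G.minDegree) :
    (kDominationNumber G k : ℝ) ≤ Fintype.card V *
      (p + G.minDegree.choose (G.minDegree - k + 1) * (1 - p) ^ (G.minDegree - k + 2)) := by
  have hX (A : Finset V) : (kDominationNumber G k : ℝ) ≤ #A + #(G.undercovered k A) := by
    have h := kDominationNumber_le_ncard (G.kDominating_union_undercovered k A)
    rw [Set.ncard_coe_finset] at h
    exact_mod_cast h.trans (card_union_le _ _)
  calc (kDominationNumber G k : ℝ)
      = ∑ A : Finset V, subsetProb p A * kDominationNumber G k := by
        rw [← sum_mul, sum_subsetProb, one_mul]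
    _ ≤ ∑ A : Finset V, subsetProb p A * (#A + #(G.undercovered k A)) :=
        sum_le_sum fun A _ => mul_le_mul_of_nonneg_left (hX A) (subsetProb_nonneg hp₀ hp₁ A)
    _ = Fintype.card V * p + ∑ v, ∑ A with v ∈ G.undercovered k A, subsetProb p A := by
        rw [← sum_subsetProb_mul_card, ← sum_mul_card_eq_sum_sum_filter_mem, ← sum_add_distrib]
        simp only [mul_add]
    _ ≤ Fintype.card V * p + ∑ _v : V,
          G.minDegree.choose (G.minDegree - k + 1) * (1 - p) ^ (G.minDegree - k + 2) := by
        gcongr with v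
        exact sum_subsetProb_mem_undercovered_le hp₀ hp₁ hk v
    _ = _ := by rw [sum_const, card_univ, nsmul_eq_mul, mul_add]

end SimpleGraph

theorem Nat.choose_sub_add_one_le_choose_sub_one {n k : ℕ} (hk : k ≤ n) :
    n.choose (n - k + 1) ≤ n.choose (k - 1) := by
  rcases k with _ | k
  · simp
  · rw [show n - (k + 1) + 1 = n - k by omega, Nat.add_sub_cancel, Nat.choose_symm (by omega)]

/-- `q` is chosen to minimise `1 - q + B q ^ (d + 1)`. -/
theorem one_sub_add_mul_pow_succ_eq {B : ℝ} (hB : 0 < B) {d : ℕ} (hd : d ≠ 0) {q : ℝ}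
    (hq : q = (B * (1 + d)) ^ (-(1 / (d : ℝ)))) :
    1 - q + B * q ^ (d + 1) = 1 - d / (B ^ (1 / (d : ℝ)) * (1 + d) ^ (1 + 1 / (d : ℝ))) := by
  have hD : (0 : ℝ) < 1 + d := by positivity
  have hqd : q ^ d = (B * (1 + d))⁻¹ := by
    rw [hq, ← Real.rpow_natCast, ← Real.rpow_mul (by positivity), neg_mul, one_div,
      inv_mul_cancel₀ (by exact_mod_cast hd), Real.rpow_neg_one]
  have hq' : q = (B ^ (1 / (d : ℝ)) * (1 + d) ^ (1 / (d : ℝ)))⁻¹ := by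
    rw [hq, Real.rpow_neg (by positivity), Real.mul_rpow hB.le hD.le]
  rw [pow_succ, hqd, Real.rpow_add hD, Real.rpow_one, hq']
  field_simp
  ring

theorem kDominationNumber_upper_bound_general {V : Type*} [Fintype V]
    (G : SimpleGraph V) [DecidableRel G.Adj] (k : ℕ)
    (hδ : k ≤ G.minDegree) :
    (kDominationNumber G k : ℝ) ≤
      (1 - ((G.minDegree - k + 1 : ℕ) : ℝ) /
          (((G.minDegree.choose (k - 1) : ℕ) : ℝ) ^
              ((1 : ℝ) / ((G.minDegree - k + 1 : ℕ) : ℝ)) *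
            (1 + ((G.minDegree - k + 1 : ℕ) : ℝ)) ^
              (1 + (1 : ℝ) / ((G.minDegree - k + 1 : ℕ) : ℝ)))) *
        (Fintype.card V : ℝ) := by
  classical
  set d := G.minDegree - k + 1
  set B : ℝ := ((G.minDegree.choose (k - 1) : ℕ) : ℝ)
  have hB : 1 ≤ B := Nat.one_le_cast.2 (Nat.choose_pos (by omega))
  set q : ℝ := (B * (1 + d)) ^ (-(1 / (d : ℝ))) with hq
  have hq₀ : 0 ≤ q := by positivity
  have hq₁ : q ≤ 1 :=
    Real.rpow_le_one_of_one_le_of_nonpos (one_le_mul_of_one_le_of_one_le hB (by simp))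
      (by simp only [Left.neg_nonpos_iff]; positivity)
  have h := G.kDominationNumber_le (sub_nonneg.2 hq₁) (sub_le_self 1 hq₀) hδ
  rw [sub_sub_cancel] at h
  calc (kDominationNumber G k : ℝ)
      ≤ Fintype.card V * (1 - q + G.minDegree.choose d * q ^ (d + 1)) := by linarith
    _ ≤ Fintype.card V * (1 - q + B * q ^ (d + 1)) := by
        gcongr
        exact Nat.cast_le.2 (Nat.choose_sub_add_one_le_choose_sub_one hδ)
    _ = _ := by rw [one_sub_add_mul_pow_succ_eq (by positivity) (by omega) hq, mul_comm]

/-- Theorem (Gagarin–Poghosyan–Zverovich 2013): for `δ ≥ k`,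
`γ_k(G) ≤ (1 − δ'/(b^{1/δ'} (1+δ')^{1+1/δ'})) n` with `δ' = δ − k + 1`, `b = C(δ, k−1)`. -/
theorem kDominationNumber_upper_bound {V : Type*} [Fintype V] [Nonempty V]
    (G : SimpleGraph V) [DecidableRel G.Adj] (k : ℕ) (hk : 1 ≤ k)
    (hδ : k ≤ G.minDegree) :
    (kDominationNumber G k : ℝ) ≤
      (1 - ((G.minDegree - k + 1 : ℕ) : ℝ) /
          (((G.minDegree.choose (k - 1) : ℕ) : ℝ) ^
              ((1 : ℝ) / ((G.minDegree - k + 1 : ℕ) : ℝ)) *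
            (1 + ((G.minDegree - k + 1 : ℕ) : ℝ)) ^
              (1 + (1 : ℝ) / ((G.minDegree - k + 1 : ℕ) : ℝ)))) *
        (Fintype.card V : ℝ) :=
  kDominationNumber_upper_bound_general G k hδ
end

section
/- Expected size bound: let G have n vertices and minimum degree δ ≥ k, pick each vertex independently with probability p into A, and let B = {v ∉ A : |N(v) ∩ A| < k}. Then E[|A| + |B|] ≤ n·(p + (1−p) · Σ_{i=0}^{k−1} C(δ, i) p^i (1−p)^{δ−i}). -/
open Finset

private lemma atom_sum {V : Type*} [Fintype V] [DecidableEq V] (p : ℝ)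
    (s : Finset V) (σ : V → Bool) :
    ∑ ω : V → Bool, (∏ v : V, (if ω v then p else 1 - p)) *
        (if ∀ v ∈ s, ω v = σ v then (1:ℝ) else 0)
      = ∏ v ∈ s, (if σ v then p else 1 - p) := by
  classical
  let e := Equiv.piEquivPiSubtypeProd (fun x => x ∈ s) (fun _ => Bool)
  rw [← Equiv.sum_comp e.symm, Fintype.sum_prod_type]
  have hsplit : ∀ (f : {x // x ∈ s} → Bool) (g : {x // ¬ x ∈ s} → Bool),
      (∏ v : V, (if e.symm (f, g) v then p else 1 - p))
        = (∏ v : {x // x ∈ s}, (if f v then p else 1 - p)) *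
          (∏ v : {x // ¬ x ∈ s}, (if g v then p else 1 - p)) := by
    intro f g
    rw [← Fintype.prod_subtype_mul_prod_subtype (fun x => x ∈ s)
      (fun v => (if e.symm (f, g) v then p else 1 - p))]
    congr 1
    · refine Finset.prod_congr (by congr!) fun v _ => ?_
      simp [e, Equiv.piEquivPiSubtypeProd_symm_apply, v.2]
    · refine Finset.prod_congr (by congr!) fun v _ => ?_
      simp [e, Equiv.piEquivPiSubtypeProd_symm_apply, v.2]
  have hind : ∀ (f : {x // x ∈ s} → Bool) (g : {x // ¬ x ∈ s} → Bool),
      ((∀ v ∈ s, e.symm (f, g) v = σ v) ↔ f = fun x => σ x.1) := by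
    intro f g
    constructor
    · intro h
      funext x
      have := h x.1 x.2
      simpa [e, Equiv.piEquivPiSubtypeProd_symm_apply, x.2] using this
    · intro h v hv
      simp [e, Equiv.piEquivPiSubtypeProd_symm_apply, hv, h]
  have hgsum : (∑ g : {x // ¬ x ∈ s} → Bool,
      ∏ v : {x // ¬ x ∈ s}, (if g v then p else 1 - p)) = 1 := by
    rw [← Fintype.prod_sum (fun (_ : {x // ¬ x ∈ s}) (b : Bool) => if b then p else 1 - p)]
    have : (∑ b : Bool, if b then p else 1 - p) = 1 := by
      rw [Fintype.sum_bool]; norm_num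
    rw [Finset.prod_congr rfl fun v _ => this, Finset.prod_const_one]
  calc ∑ f : {x // x ∈ s} → Bool, ∑ g : {x // ¬ x ∈ s} → Bool,
        (∏ v : V, (if e.symm (f, g) v then p else 1 - p)) *
          (if ∀ v ∈ s, e.symm (f, g) v = σ v then (1:ℝ) else 0)
      = ∑ f : {x // x ∈ s} → Bool,
          ((∏ v : {x // x ∈ s}, (if f v then p else 1 - p)) *
            (if f = (fun x => σ x.1) then (1:ℝ) else 0)) *
          ∑ g : {x // ¬ x ∈ s} → Bool,
            (∏ v : {x // ¬ x ∈ s}, (if g v then p else 1 - p)) := by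
        refine Finset.sum_congr rfl fun f _ => ?_
        rw [Finset.mul_sum]
        refine Finset.sum_congr rfl fun g _ => ?_
        rw [hsplit f g, if_congr (hind f g) rfl rfl]
        ring
    _ = ∑ f : {x // x ∈ s} → Bool,
          ((∏ v : {x // x ∈ s}, (if f v then p else 1 - p)) *
            (if f = (fun x => σ x.1) then (1:ℝ) else 0)) := by
        refine Finset.sum_congr rfl fun f _ => ?_
        rw [hgsum, mul_one]
    _ = ∏ v ∈ s, (if σ v then p else 1 - p) := by
        rw [Fintype.sum_eq_single (fun x : {x // x ∈ s} => σ x.1)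
          (fun f hf => by rw [if_neg hf, mul_zero])]
        rw [if_pos rfl, mul_one]
        exact (Finset.prod_subtype s (fun x => Iff.rfl)
          (fun x => if σ x then p else 1 - p)).symm

private lemma event_sum {V : Type*} [Fintype V] [DecidableEq V] (p : ℝ) (k : ℕ)
    (v : V) (S : Finset V) (hv : v ∉ S) :
    ∑ ω : V → Bool, (∏ u : V, (if ω u then p else 1 - p)) *
        (if (ω v = false ∧ (S.filter (fun u => ω u = true)).card < k) then (1:ℝ) else 0)
      = (1 - p) * ∑ i ∈ Finset.range k,
          ((S.card.choose i : ℕ) : ℝ) * p ^ i * (1 - p) ^ (S.card - i) := by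
  classical
  set P : Finset (Finset V) := S.powerset.filter (fun T => T.card < k) with hP
  -- pointwise decomposition of the indicator
  have hpt : ∀ ω : V → Bool,
      (if (ω v = false ∧ (S.filter (fun u => ω u = true)).card < k) then (1:ℝ) else 0)
        = ∑ T ∈ P, (if (ω v = false ∧ S.filter (fun u => ω u = true) = T) then (1:ℝ) else 0) := by
    intro ω
    by_cases h1 : ω v = false
    · simp only [h1, true_and]
      rw [Finset.sum_ite_eq P (S.filter (fun u => ω u = true)) (fun _ => (1:ℝ))]
      simp [hP, Finset.filter_subset]
    · simp [h1]
  -- each條 condition is an atom condition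
  have hcond : ∀ T ∈ P, ∀ ω : V → Bool,
      ((ω v = false ∧ S.filter (fun u => ω u = true) = T) ↔
        (∀ u ∈ insert v S, ω u = (fun x => decide (x ∈ T)) u)) := by
    intro T hT ω
    have hTS : T ⊆ S := Finset.mem_powerset.mp (Finset.mem_filter.mp hT).1
    have hvT : v ∉ T := fun h => hv (hTS h)
    constructor
    · rintro ⟨h1, h2⟩ u hu
      rcases Finset.mem_insert.mp hu with rfl | huS
      · simp [h1, hvT]
      · by_cases hω : ω u = true
        · have : u ∈ T := h2 ▸ Finset.mem_filter.mpr ⟨huS, hω⟩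
          simp [hω, this]
        · have huT : u ∉ T := by
            intro h
            rw [← h2] at h
            exact hω (Finset.mem_filter.mp h).2
          have hfa : ω u = false := by
            cases h : ω u
            · rfl
            · exact absurd h hω
          simp [hfa, huT]
    · intro h
      refine ⟨?_, ?_⟩
      · have := h v (Finset.mem_insert_self v S)
        simpa [hvT] using this
      · ext u
        simp only [Finset.mem_filter]
        constructor
        · rintro ⟨huS, hω⟩
          have := h u (Finset.mem_insert_of_mem huS)
          rw [hω] at this
          exact of_decide_eq_true this.symm
        · intro huT
          refine ⟨hTS huT, ?_⟩
          have := h u (Finset.mem_insert_of_mem (hTS huT))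
          simp [huT] at this
          exact this
  -- compute the sum for each atom
  have hatom : ∀ T ∈ P,
      (∑ ω : V → Bool, (∏ u : V, (if ω u then p else 1 - p)) *
          (if (ω v = false ∧ S.filter (fun u => ω u = true) = T) then (1:ℝ) else 0))
        = (1 - p) * (p ^ T.card * (1 - p) ^ (S.card - T.card)) := by
    intro T hT
    have hTS : T ⊆ S := Finset.mem_powerset.mp (Finset.mem_filter.mp hT).1
    have hvT : v ∉ T := fun h => hv (hTS h)
    calc ∑ ω : V → Bool, (∏ u : V, (if ω u then p else 1 - p)) *
          (if (ω v = false ∧ S.filter (fun u => ω u = true) = T) then (1:ℝ) else 0)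
        = ∑ ω : V → Bool, (∏ u : V, (if ω u then p else 1 - p)) *
            (if (∀ u ∈ insert v S, ω u = (fun x => decide (x ∈ T)) u) then (1:ℝ) else 0) :=
          Finset.sum_congr rfl fun ω _ => by rw [if_congr (hcond T hT ω) rfl rfl]
      _ = ∏ u ∈ insert v S, (if (fun x => decide (x ∈ T)) u then p else 1 - p) :=
          atom_sum p (insert v S) (fun x => decide (x ∈ T))
      _ = (1 - p) * (p ^ T.card * (1 - p) ^ (S.card - T.card)) := by
          rw [Finset.prod_insert hv]
          have h1 : (if decide (v ∈ T) then p else 1 - p) = 1 - p := by simp [hvT]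
          rw [h1]
          congr 1
          rw [← Finset.prod_sdiff hTS]
          have h2 : ∀ u ∈ S \ T, (if decide (u ∈ T) then p else 1 - p) = 1 - p := by
            intro u hu
            simp [(Finset.mem_sdiff.mp hu).2]
          have h3 : ∀ u ∈ T, (if decide (u ∈ T) then p else 1 - p) = p := by
            intro u hu
            simp [hu]
          rw [Finset.prod_congr rfl h2, Finset.prod_congr rfl h3, Finset.prod_const,
            Finset.prod_const, Finset.card_sdiff_of_subset hTS]
          ring
  -- put it together
  calc ∑ ω : V → Bool, (∏ u : V, (if ω u then p else 1 - p)) *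
        (if (ω v = false ∧ (S.filter (fun u => ω u = true)).card < k) then (1:ℝ) else 0)
      = ∑ T ∈ P, ∑ ω : V → Bool, (∏ u : V, (if ω u then p else 1 - p)) *
          (if (ω v = false ∧ S.filter (fun u => ω u = true) = T) then (1:ℝ) else 0) := by
        rw [Finset.sum_comm]
        refine Finset.sum_congr rfl fun ω _ => ?_
        rw [hpt ω, Finset.mul_sum]
    _ = ∑ T ∈ P, (1 - p) * (p ^ T.card * (1 - p) ^ (S.card - T.card)) := by
        exact Finset.sum_congr rfl hatom
    _ = (1 - p) * ∑ i ∈ Finset.range k,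
          ((S.card.choose i : ℕ) : ℝ) * p ^ i * (1 - p) ^ (S.card - i) := by
        rw [← Finset.mul_sum]
        congr 1
        have hP2 : P = (Finset.range k).biUnion (fun i => S.powersetCard i) := by
          ext T
          simp only [hP, Finset.mem_filter, Finset.mem_powerset, Finset.mem_biUnion,
            Finset.mem_range, Finset.mem_powersetCard]
          constructor
          · rintro ⟨h1, h2⟩; exact ⟨T.card, h2, h1, rfl⟩
          · rintro ⟨i, hi, h1, rfl⟩; exact ⟨h1, hi⟩
        rw [hP2, Finset.sum_biUnion]
        · refine Finset.sum_congr rfl fun i _ => ?_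
          rw [Finset.sum_congr rfl (fun T hT => by
            rw [(Finset.mem_powersetCard.mp hT).2]), Finset.sum_const,
            Finset.card_powersetCard, nsmul_eq_mul]
          ring
        · intro i hi j hj hij
          exact (S.pairwise_disjoint_powersetCard hij).mono le_rfl le_rfl

private lemma prob_mem {V : Type*} [Fintype V] [DecidableEq V] (p : ℝ) (v : V) :
    ∑ ω : V → Bool, (∏ u : V, (if ω u then p else 1 - p)) *
        (if ω v = true then (1:ℝ) else 0) = p := by
  classical
  have := atom_sum p {v} (fun _ => true)
  simp only [Finset.mem_singleton, forall_eq, Finset.prod_singleton, if_true] at this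
  exact this



/-- Expected-size bound for the randomized `k`-domination construction: each vertex is
put into `A` independently with probability `p` (the sample space is `V → Bool` with the
product Bernoulli measure), `B` consists of the vertices outside `A` with fewer than `k`
neighbours in `A`, and
`E[|A| + |B|] ≤ n (p + (1−p) Σ_{i=0}^{k−1} C(δ,i) pⁱ (1−p)^{δ−i})`. -/
theorem expected_size_bound {V : Type*} [Fintype V] [DecidableEq V] [Nonempty V]
    (G : SimpleGraph V) [DecidableRel G.Adj] (k : ℕ) (hk : 1 ≤ k)
    (hδ : k ≤ G.minDegree) (p : ℝ) (hp0 : 0 ≤ p) (hp1 : p ≤ 1) :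
    (∑ ω : V → Bool,
        (∏ v : V, (if ω v then p else 1 - p)) *
          ((({v : V | ω v = true} : Set V).ncard : ℝ) +
            (({v : V | ω v ≠ true ∧
                (G.neighborSet v ∩ {u : V | ω u = true}).ncard < k} : Set V).ncard : ℝ)))
      ≤ (Fintype.card V : ℝ) *
          (p + (1 - p) *
            ∑ i ∈ Finset.range k,
              ((G.minDegree.choose i : ℕ) : ℝ) * p ^ i * (1 - p) ^ (G.minDegree - i)) := by
  classical
  set T : ℝ := ∑ i ∈ Finset.range k,
    ((G.minDegree.choose i : ℕ) : ℝ) * p ^ i * (1 - p) ^ (G.minDegree - i) with hTdef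
  -- choose a subset of neighbours of size exactly δ for each vertex
  have hSv : ∀ v : V, ∃ S : Finset V, S ⊆ G.neighborFinset v ∧ S.card = G.minDegree := by
    intro v
    exact Finset.exists_subset_card_eq (G.minDegree_le_degree v)
  choose S hSsub hScard using hSv
  have hvS : ∀ v : V, v ∉ S v := fun v h =>
    G.notMem_neighborFinset_self v (hSsub v h)
  have hWnn : ∀ ω : V → Bool, 0 ≤ ∏ v : V, (if ω v then p else 1 - p) := by
    intro ω
    refine Finset.prod_nonneg fun v _ => ?_
    split
    · exact hp0
    · linarith
  -- counting sets as sums of indicators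
  have hA : ∀ ω : V → Bool, (({v : V | ω v = true} : Set V).ncard : ℝ)
      = ∑ v : V, (if ω v = true then (1:ℝ) else 0) := by
    intro ω
    rw [Set.ncard_eq_toFinset_card', Set.toFinset_setOf, Finset.card_filter]
    push_cast
    exact Finset.sum_congr rfl fun v _ => by split <;> norm_num
  have hB : ∀ ω : V → Bool,
      ((({v : V | ω v ≠ true ∧
          (G.neighborSet v ∩ {u : V | ω u = true}).ncard < k} : Set V).ncard : ℝ))
      = ∑ v : V, (if (ω v ≠ true ∧
          (G.neighborSet v ∩ {u : V | ω u = true}).ncard < k) then (1:ℝ) else 0) := by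
    intro ω
    rw [Set.ncard_eq_toFinset_card', Set.toFinset_setOf, Finset.card_filter]
    push_cast
    exact Finset.sum_congr rfl fun v _ => by split <;> norm_num
  -- the B-indicator is dominated by the S_v event indicator
  have hBle : ∀ (v : V) (ω : V → Bool),
      (if (ω v ≠ true ∧ (G.neighborSet v ∩ {u : V | ω u = true}).ncard < k)
        then (1:ℝ) else 0)
      ≤ (if (ω v = false ∧ ((S v).filter (fun u => ω u = true)).card < k)
        then (1:ℝ) else 0) := by
    intro v ω
    by_cases h1 : (ω v ≠ true ∧ (G.neighborSet v ∩ {u : V | ω u = true}).ncard < k)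
    · obtain ⟨ha, hb⟩ := h1
      have hav : ω v = false := by
        cases h : ω v
        · rfl
        · exact absurd h ha
      have hncard : (G.neighborSet v ∩ {u : V | ω u = true}).ncard
          = ((G.neighborFinset v) ∩ Finset.univ.filter (fun u => ω u = true)).card := by
        rw [Set.ncard_eq_toFinset_card']
        congr 1
        simp [Set.toFinset_inter, Set.toFinset_setOf, SimpleGraph.neighborFinset_def]
      have hcard : ((S v).filter (fun u => ω u = true)).card
          ≤ (G.neighborSet v ∩ {u : V | ω u = true}).ncard := by
        rw [hncard]
        refine Finset.card_le_card fun u hu => ?_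
        rw [Finset.mem_inter]
        exact ⟨hSsub v (Finset.mem_filter.mp hu).1,
          Finset.mem_filter.mpr ⟨Finset.mem_univ u, (Finset.mem_filter.mp hu).2⟩⟩
      rw [if_pos ⟨ha, hb⟩, if_pos ⟨hav, lt_of_le_of_lt hcard hb⟩]
    · rw [if_neg h1]
      split <;> norm_num
  calc (∑ ω : V → Bool,
        (∏ v : V, (if ω v then p else 1 - p)) *
          ((({v : V | ω v = true} : Set V).ncard : ℝ) +
            (({v : V | ω v ≠ true ∧
                (G.neighborSet v ∩ {u : V | ω u = true}).ncard < k} : Set V).ncard : ℝ)))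
      = (∑ v : V, ∑ ω : V → Bool, (∏ u : V, (if ω u then p else 1 - p)) *
            (if ω v = true then (1:ℝ) else 0))
        + (∑ v : V, ∑ ω : V → Bool, (∏ u : V, (if ω u then p else 1 - p)) *
            (if (ω v ≠ true ∧
              (G.neighborSet v ∩ {u : V | ω u = true}).ncard < k) then (1:ℝ) else 0)) := by
        rw [Finset.sum_comm, Finset.sum_comm (γ := V), ← Finset.sum_add_distrib]
        refine Finset.sum_congr rfl fun ω _ => ?_
        rw [hA ω, hB ω, mul_add, Finset.mul_sum, Finset.mul_sum]
    _ ≤ (∑ _v : V, p) + ∑ _v : V, (1 - p) * T := by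
        refine add_le_add (le_of_eq ?_) ?_
        · exact Finset.sum_congr rfl fun v _ => prob_mem p v
        · refine Finset.sum_le_sum fun v _ => ?_
          have h1 : (∑ ω : V → Bool, (∏ u : V, (if ω u then p else 1 - p)) *
              (if (ω v = false ∧ ((S v).filter (fun u => ω u = true)).card < k)
                then (1:ℝ) else 0)) = (1 - p) * T := by
            rw [event_sum p k v (S v) (hvS v), hScard v, hTdef]
          rw [← h1]
          refine Finset.sum_le_sum fun ω _ => ?_
          exact mul_le_mul_of_nonneg_left (hBle v ω) (hWnn ω)
    _ = (Fintype.card V : ℝ) * (p + (1 - p) * T) := by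
        rw [Finset.sum_const, Finset.sum_const, Finset.card_univ, nsmul_eq_mul,
          nsmul_eq_mul]
        ring
end
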